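/- arXiv:2306.08139 — 4 statements merged into one kernel-verified Lean document; each statement's English description precedes it below -/
import Mathlib

section
/- Let r > 0 and u(x) = ∫₀^{|x|} max(s² - r², 0)^{1/2} ds on ℝ². Then u is continuously differentiable on ℝ², and its gradient satisfies the Hölder estimate |∇u(x) - ∇u(y)| ≤ C |x - y|^{1/2} for all x, y in the closed annulus {r ≤ |x| ≤ 2r}, where C depends only on r. -/
/-!
Write `u(x) = G(‖x‖)` with `G(t) = ∫₀ᵗ f(s) ds` and `f(s) = √((s² - r²)₊)`. Since `f` is
continuous, `G` is `C¹`; since `G` vanishes on `[-r, r]`, `u` is locally constant at the origin,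
so `u` is `C¹` with `∇u(x) = f(‖x‖) x/‖x‖`. On the annulus the profile is `1/2`-Hölder,
`|f(a) - f(b)| ≤ √|a² - b²| ≤ 2√r √|a - b|` (`√` is `1/2`-Hölder and `(·)₊` is `1`-Lipschitz),
while `x ↦ x/‖x‖` is `2/r`-Lipschitz there and `f ≤ 2r`; the resulting Lipschitz term is
dominated by `√‖x - y‖` because `‖x - y‖ ≤ 4r`.
-/

open Real Topology

theorem abs_sqrt_sub_sqrt_le {u v : ℝ} (hu : 0 ≤ u) (hv : 0 ≤ v) : |√u - √v| ≤ √|u - v| := by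
  wlog h : v ≤ u generalizing u v
  · rw [abs_sub_comm, abs_sub_comm u v]; exact this hv hu (le_of_not_ge h)
  have hsub : √u ≤ √(u - v) + √v := by
    refine sqrt_le_iff.2 ⟨by positivity, ?_⟩
    nlinarith [sq_sqrt hv, sq_sqrt (sub_nonneg.2 h), sqrt_nonneg v, sqrt_nonneg (u - v)]
  rw [abs_of_nonneg (sub_nonneg.2 (sqrt_le_sqrt h)), abs_of_nonneg (sub_nonneg.2 h)]
  linarith

theorem Continuous.contDiff_one_integral {f : ℝ → ℝ} (hf : Continuous f) (a : ℝ) :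
    ContDiff ℝ 1 (fun t => ∫ s in a..t, f s) := by
  rw [contDiff_one_iff_deriv]
  refine ⟨fun t => (hf.integral_hasStrictDerivAt a t).hasDerivAt.differentiableAt, ?_⟩
  rwa [funext (Continuous.deriv_integral f hf a)]

theorem norm_smul_inv_norm_sub_smul_inv_norm_le {E : Type*} [NormedAddCommGroup E]
    [NormedSpace ℝ E] {x : E} (hx : x ≠ 0) (y : E) :
    ‖‖x‖⁻¹ • x - ‖y‖⁻¹ • y‖ ≤ 2 * ‖x - y‖ / ‖x‖ := by
  have hsplit : ‖x‖⁻¹ • x - ‖y‖⁻¹ • y =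
      ‖x‖⁻¹ • (x - y) + (‖x‖⁻¹ * (‖y‖ - ‖x‖)) • (‖y‖⁻¹ • y) := by
    rcases eq_or_ne y 0 with rfl | hy
    · simp
    · have : ‖y‖ ≠ 0 := norm_ne_zero_iff.2 hy
      match_scalars
      · field_simp
      · field_simp; ring
  calc ‖‖x‖⁻¹ • x - ‖y‖⁻¹ • y‖
      ≤ ‖x‖⁻¹ * ‖x - y‖ + ‖x‖⁻¹ * |‖y‖ - ‖x‖| * (‖y‖⁻¹ * ‖y‖) := by
        rw [hsplit]
        refine (norm_add_le _ _).trans_eq ?_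
        simp only [norm_smul, norm_mul, norm_inv, Real.norm_eq_abs, abs_norm]
    _ ≤ ‖x‖⁻¹ * ‖x - y‖ + ‖x‖⁻¹ * ‖x - y‖ * 1 := by
        gcongr
        · rw [abs_sub_comm]; exact abs_norm_sub_norm_le x y
        · exact inv_mul_le_one_of_le₀ le_rfl (norm_nonneg y)
    _ = 2 * ‖x - y‖ / ‖x‖ := by ring

section RadialFunctions

variable {F : Type*} [NormedAddCommGroup F] [InnerProductSpace ℝ F]

theorem HasDerivAt.comp_hasGradientAt [CompleteSpace F] {f : F → ℝ} {f' x : F} {g : ℝ → ℝ}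
    {g' : ℝ} (hg : HasDerivAt g g' (f x)) (hf : HasGradientAt f f' x) :
    HasGradientAt (g ∘ f) (g' • f') x := by
  rw [hasGradientAt_iff_hasFDerivAt] at hf ⊢
  refine (hg.comp_hasFDerivAt x hf).congr_fderiv ?_
  ext v
  simp

theorem hasGradientAt_norm_sq [CompleteSpace F] (x : F) :
    HasGradientAt (fun z => ‖z‖ ^ 2) ((2 : ℝ) • x) x := by
  rw [hasGradientAt_iff_hasFDerivAt]
  refine (hasStrictFDerivAt_norm_sq x).hasFDerivAt.congr_fderiv ?_
  ext v
  simp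

theorem hasGradientAt_norm [CompleteSpace F] {x : F} (hx : x ≠ 0) :
    HasGradientAt (‖·‖) (‖x‖⁻¹ • x) x := by
  have hx' : ‖x‖ ≠ 0 := norm_ne_zero_iff.2 hx
  have h := HasDerivAt.comp_hasGradientAt (f := fun z : F => ‖z‖ ^ 2)
    (hasDerivAt_sqrt (pow_ne_zero 2 hx')) (hasGradientAt_norm_sq x)
  simp only [Function.comp_def, sqrt_sq (norm_nonneg _), smul_smul] at h
  convert h using 2
  field_simp

theorem contDiff_comp_norm {n : WithTop ℕ∞} {g : ℝ → ℝ} (hg : ContDiff ℝ n g)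
    (hg0 : ∀ᶠ t in 𝓝 0, g t = g 0) : ContDiff ℝ n (fun x : F => g ‖x‖) := by
  refine contDiff_iff_contDiffAt.2 fun x => ?_
  rcases eq_or_ne x 0 with rfl | hx
  · exact (contDiffAt_const (c := g 0)).congr_of_eventuallyEq
      ((continuous_norm.tendsto' 0 0 norm_zero).eventually hg0)
  · exact hg.contDiffAt.comp x (contDiffAt_norm ℝ hx)

end RadialFunctions

noncomputable def modelProfile (r s : ℝ) : ℝ := √(max (s ^ 2 - r ^ 2) 0)

noncomputable def modelPrimitive (r t : ℝ) : ℝ := ∫ s in (0:ℝ)..t, modelProfile r s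

theorem continuous_modelProfile (r : ℝ) : Continuous (modelProfile r) := by
  unfold modelProfile; fun_prop

theorem modelProfile_nonneg (r s : ℝ) : 0 ≤ modelProfile r s := sqrt_nonneg _

theorem modelProfile_eq_zero {r s : ℝ} (h : s ^ 2 ≤ r ^ 2) : modelProfile r s = 0 := by
  rw [modelProfile, max_eq_right (sub_nonpos.2 h), sqrt_zero]

theorem modelProfile_le_abs (r s : ℝ) : modelProfile r s ≤ |s| := by
  rw [← sqrt_sq_eq_abs]
  exact sqrt_le_sqrt (max_le (by nlinarith) (sq_nonneg s))

theorem abs_modelProfile_sub_le (r a b : ℝ) :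
    |modelProfile r a - modelProfile r b| ≤ √|a ^ 2 - b ^ 2| := by
  refine (abs_sqrt_sub_sqrt_le (le_max_right _ _) (le_max_right _ _)).trans (sqrt_le_sqrt ?_)
  refine (abs_max_sub_max_le_abs _ _ _).trans_eq ?_
  rw [sub_sub_sub_cancel_right]

theorem hasDerivAt_modelPrimitive (r t : ℝ) :
    HasDerivAt (modelPrimitive r) (modelProfile r t) t :=
  ((continuous_modelProfile r).integral_hasStrictDerivAt 0 t).hasDerivAt

theorem modelPrimitive_eq_zero {r t : ℝ} (ht : |t| ≤ r) : modelPrimitive r t = 0 := by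
  have hzero : ∀ s ∈ Set.uIcc 0 t, modelProfile r s = 0 := fun s hs => by
    refine modelProfile_eq_zero (sq_le_sq.2 ?_)
    have hst : |s| ≤ |t| := by simpa using Set.abs_sub_left_of_mem_uIcc hs
    exact hst.trans (ht.trans (le_abs_self r))
  rw [modelPrimitive, intervalIntegral.integral_congr hzero, intervalIntegral.integral_zero]

theorem eventually_modelPrimitive_eq_zero {r : ℝ} (hr : 0 < r) :
    ∀ᶠ t in 𝓝 0, modelPrimitive r t = modelPrimitive r 0 := by
  filter_upwards [Metric.closedBall_mem_nhds (0 : ℝ) hr] with t ht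
  rw [modelPrimitive_eq_zero (by simpa using ht), modelPrimitive_eq_zero (by simpa using hr.le)]

section ModelPotential

variable {F : Type*} [NormedAddCommGroup F] [InnerProductSpace ℝ F]

theorem hasGradientAt_modelPrimitive_norm [CompleteSpace F] (r : ℝ) {x : F} (hx : x ≠ 0) :
    HasGradientAt (fun z : F => modelPrimitive r ‖z‖) (modelProfile r ‖x‖ • ‖x‖⁻¹ • x) x :=
  (hasDerivAt_modelPrimitive r ‖x‖).comp_hasGradientAt (hasGradientAt_norm hx)

theorem norm_modelProfile_smul_sub_le {r : ℝ} (hr : 0 < r) {x y : F} (hx : r ≤ ‖x‖)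
    (hx' : ‖x‖ ≤ 2 * r) (hy : r ≤ ‖y‖) (hy' : ‖y‖ ≤ 2 * r) :
    ‖modelProfile r ‖x‖ • ‖x‖⁻¹ • x - modelProfile r ‖y‖ • ‖y‖⁻¹ • y‖ ≤
      10 * √r * √‖x - y‖ := by
  have hx0 : x ≠ 0 := norm_pos_iff.1 (hr.trans_le hx)
  set ρ := √r
  set δ := √‖x - y‖
  have hρ : ρ ^ 2 = r := sq_sqrt hr.le
  have hδ : δ ^ 2 = ‖x - y‖ := sq_sqrt (norm_nonneg _)
  have hδρ : δ ≤ 2 * ρ := by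
    have := norm_sub_le x y
    nlinarith [sqrt_nonneg r, sqrt_nonneg ‖x - y‖]
  have hprofile : |modelProfile r ‖x‖ - modelProfile r ‖y‖| ≤ 2 * ρ * δ := by
    refine (abs_modelProfile_sub_le r _ _).trans ?_
    refine (sqrt_le_sqrt ?_).trans_eq (sqrt_sq (by positivity))
    rw [sq_sub_sq, abs_mul, abs_of_pos (by linarith)]
    calc (‖x‖ + ‖y‖) * |‖x‖ - ‖y‖| ≤ 4 * r * ‖x - y‖ := by
          gcongr
          · linarith
          · exact abs_norm_sub_norm_le x y
      _ = (2 * ρ * δ) ^ 2 := by rw [mul_pow, mul_pow, hρ, hδ]; ring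
  have hunit : modelProfile r ‖y‖ * ‖‖x‖⁻¹ • x - ‖y‖⁻¹ • y‖ ≤ 8 * ρ * δ :=
    calc modelProfile r ‖y‖ * ‖‖x‖⁻¹ • x - ‖y‖⁻¹ • y‖
        ≤ (2 * r) * (2 * ‖x - y‖ / r) :=
          mul_le_mul ((modelProfile_le_abs r _).trans (by rwa [abs_norm]))
            ((norm_smul_inv_norm_sub_smul_inv_norm_le hx0 y).trans (by gcongr))
            (norm_nonneg _) (by positivity)
      _ = 4 * δ ^ 2 := by rw [hδ]; field_simp; ring
      _ ≤ 8 * ρ * δ := by nlinarith [sqrt_nonneg ‖x - y‖]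
  have hsplit : modelProfile r ‖x‖ • ‖x‖⁻¹ • x - modelProfile r ‖y‖ • ‖y‖⁻¹ • y =
      (modelProfile r ‖x‖ - modelProfile r ‖y‖) • ‖x‖⁻¹ • x +
        modelProfile r ‖y‖ • (‖x‖⁻¹ • x - ‖y‖⁻¹ • y) := by
    module
  calc _ ≤ |modelProfile r ‖x‖ - modelProfile r ‖y‖| * 1 +
        modelProfile r ‖y‖ * ‖‖x‖⁻¹ • x - ‖y‖⁻¹ • y‖ := by
        rw [hsplit]
        refine (norm_add_le _ _).trans_eq ?_
        rw [norm_smul, norm_smul, norm_smul, norm_inv, norm_norm,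
          inv_mul_cancel₀ (norm_ne_zero_iff.2 hx0), Real.norm_eq_abs, Real.norm_eq_abs,
          abs_of_nonneg (modelProfile_nonneg r _)]
    _ ≤ 2 * ρ * δ * 1 + 8 * ρ * δ := by gcongr
    _ = 10 * ρ * δ := by ring

end ModelPotential

/-- The model potential `u(x) = ∫₀^{‖x‖} (s² - r²)₊^{1/2} ds` is `C¹` on `ℝ²` and its
gradient is `1/2`-Hölder on the closed annulus `{r ≤ ‖x‖ ≤ 2r}`, with constant
depending only on `r`. -/
theorem stmt1 (r : ℝ) (hr : 0 < r) :
    ContDiff ℝ 1 (fun x : EuclideanSpace ℝ (Fin 2) =>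
        ∫ s in (0:ℝ)..‖x‖, Real.sqrt (max (s ^ 2 - r ^ 2) 0)) ∧
    ∃ C > 0, ∀ x y : EuclideanSpace ℝ (Fin 2),
      r ≤ ‖x‖ → ‖x‖ ≤ 2 * r → r ≤ ‖y‖ → ‖y‖ ≤ 2 * r →
      ‖gradient (fun z : EuclideanSpace ℝ (Fin 2) =>
            ∫ s in (0:ℝ)..‖z‖, Real.sqrt (max (s ^ 2 - r ^ 2) 0)) x -
        gradient (fun z : EuclideanSpace ℝ (Fin 2) =>
            ∫ s in (0:ℝ)..‖z‖, Real.sqrt (max (s ^ 2 - r ^ 2) 0)) y‖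
        ≤ C * ‖x - y‖ ^ ((1:ℝ) / 2) := by
  have hu : (fun x : EuclideanSpace ℝ (Fin 2) =>
      ∫ s in (0:ℝ)..‖x‖, √(max (s ^ 2 - r ^ 2) 0)) = fun x => modelPrimitive r ‖x‖ := rfl
  rw [hu]
  refine ⟨contDiff_comp_norm ((continuous_modelProfile r).contDiff_one_integral 0)
    (eventually_modelPrimitive_eq_zero hr), 10 * √r, by positivity, fun x y hx hx' hy hy' => ?_⟩
  have hx0 : x ≠ 0 := norm_pos_iff.1 (hr.trans_le hx)
  have hy0 : y ≠ 0 := norm_pos_iff.1 (hr.trans_le hy)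
  rw [(hasGradientAt_modelPrimitive_norm r hx0).gradient,
    (hasGradientAt_modelPrimitive_norm r hy0).gradient, ← sqrt_eq_rpow]
  exact norm_modelProfile_smul_sub_le hr hx hx' hy hy'
end

section
/- Let r > 0 and u(x) = ∫₀^{|x|} max(s² - r², 0)^{1/2} ds on ℝ². For every p with 1 ≤ p < 2, the function x ↦ the radial second derivative ∂²u/∂ρ² = |x| / (|x|² - r²)^{1/2} is in L^p of the annulus {r < |x| < 2r}, but it is not in L² of that annulus. -/
/-!
In polar coordinates the integral of `f ‖x‖` over the annulus becomes `∫_r^{2r} ρ f(ρ) dρ`.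
Since `ρ² - r² = (ρ + r)(ρ - r)`, the integrand `ρ (ρ / √(ρ² - r²))ᵖ` is `(ρ - r)^(-p/2)`
times a factor that is continuous and positive on `[r, 2r]`, so it is integrable exactly when
`-p/2 > -1`, i.e. `p < 2`.
-/

open MeasureTheory Set Real

open Module in
theorem integrableOn_preimage_norm_iff {E F : Type*} [NormedAddCommGroup E] [NormedSpace ℝ E]
    [FiniteDimensional ℝ E] [MeasurableSpace E] [BorelSpace E] [Nontrivial E]
    [NormedAddCommGroup F] [NormedSpace ℝ F] (μ : Measure E) [μ.IsAddHaarMeasure]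
    {f : ℝ → F} {s : Set ℝ} (hs : MeasurableSet s) (hs₀ : s ⊆ Ioi 0) :
    IntegrableOn (fun x : E => f ‖x‖) {x | ‖x‖ ∈ s} μ ↔
      IntegrableOn (fun y : ℝ => y ^ (finrank ℝ E - 1) • f y) s := by
  change IntegrableOn (f ∘ norm) (norm ⁻¹' s) μ ↔ _
  have hcomp : (norm ⁻¹' s).indicator (f ∘ norm) = fun x : E => s.indicator f ‖x‖ :=
    funext fun _ => indicator_comp_right norm
  rw [← integrable_indicator_iff (hs.preimage measurable_norm), hcomp,
    integrable_fun_norm_addHaar, ← indicator_smul, IntegrableOn, integrable_indicator_iff hs,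
    IntegrableOn, Measure.restrict_restrict hs, inter_eq_left.mpr hs₀]
  rfl

theorem integrableOn_mul_iff_of_continuousOn {X 𝕜 : Type*} [TopologicalSpace X]
    [MeasurableSpace X] [OpensMeasurableSpace X] [NormedField 𝕜]
    [SecondCountableTopologyEither X 𝕜] {μ : Measure X} {A K : Set X} {φ g : X → 𝕜}
    (hK : IsCompact K) (hA : MeasurableSet A) (hAK : A ⊆ K) (hφ : ContinuousOn φ K)
    (hφ₀ : ∀ x ∈ K, φ x ≠ 0) :
    IntegrableOn (fun x => φ x * g x) A μ ↔ IntegrableOn g A μ := by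
  refine ⟨fun h => ?_, fun h => h.continuousOn_mul_of_subset hφ hK hA hAK⟩
  refine (h.continuousOn_mul_of_subset (hφ.inv₀ hφ₀) hK hA hAK).congr_fun (fun x hx => ?_) hA
  simp [inv_mul_cancel_left₀ (hφ₀ x (hAK hx))]

theorem integrableOn_Ioo_sub_rpow_iff {a b s : ℝ} (hab : a < b) :
    IntegrableOn (fun y => (y - a) ^ s) (Ioo a b) ↔ -1 < s := by
  have h := (measurePreserving_sub_right volume a).integrableOn_comp_preimage
    (measurableEmbedding_subRight a) (f := fun x : ℝ => x ^ s) (s := Ioo 0 (b - a))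
  rw [preimage_sub_const_Ioo, zero_add, sub_add_cancel, Function.comp_def] at h
  rw [h, intervalIntegral.integrableOn_Ioo_rpow_iff (sub_pos.mpr hab)]

theorem div_sqrt_sq_sub_sq_rpow {r y : ℝ} (p : ℝ) (hr : 0 < r) (hy : r < y) :
    (y / √(y ^ 2 - r ^ 2)) ^ p = (y / √(y + r)) ^ p * (y - r) ^ (-p / 2) := by
  have hyr : 0 < y - r := sub_pos.mpr hy
  rw [show y ^ 2 - r ^ 2 = (y + r) * (y - r) by ring, sqrt_mul (by linarith), ← div_div,
    div_rpow (div_nonneg (hr.trans hy).le (sqrt_nonneg _)) (sqrt_nonneg _),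
    sqrt_eq_rpow (y - r), ← rpow_mul hyr.le, div_eq_mul_inv, ← rpow_neg (by positivity)]
  ring_nf

theorem integrableOn_Ioo_mul_div_sqrt_sq_sub_sq_rpow_iff {r b : ℝ} (p : ℝ) (hr : 0 < r)
    (hrb : r < b) :
    IntegrableOn (fun y => y * (y / √(y ^ 2 - r ^ 2)) ^ p) (Ioo r b) ↔ p < 2 := by
  have hpos : ∀ y ∈ Icc r b, 0 < y / √(y + r) := fun y hy => by
    have : 0 < y := hr.trans_le hy.1
    positivity
  have hφ : ContinuousOn (fun y => y * (y / √(y + r)) ^ p) (Icc r b) :=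
    continuousOn_id.mul <| (continuousOn_id.div (by fun_prop) fun y hy =>
      (sqrt_pos.mpr (by linarith [hy.1])).ne').rpow_const fun y hy => .inl (hpos y hy).ne'
  have hφ₀ : ∀ y ∈ Icc r b, y * (y / √(y + r)) ^ p ≠ 0 := fun y hy =>
    mul_ne_zero (hr.trans_le hy.1).ne' (rpow_pos_of_pos (hpos y hy) p).ne'
  have hsplit : EqOn (fun y => y * (y / √(y ^ 2 - r ^ 2)) ^ p)
      (fun y => y * (y / √(y + r)) ^ p * (y - r) ^ (-p / 2)) (Ioo r b) := fun y hy => by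
    dsimp only
    rw [div_sqrt_sq_sub_sq_rpow p hr hy.1, mul_assoc]
  calc IntegrableOn (fun y => y * (y / √(y ^ 2 - r ^ 2)) ^ p) (Ioo r b)
      ↔ IntegrableOn (fun y => y * (y / √(y + r)) ^ p * (y - r) ^ (-p / 2)) (Ioo r b) :=
        integrableOn_congr_fun hsplit measurableSet_Ioo
    _ ↔ IntegrableOn (fun y => (y - r) ^ (-p / 2)) (Ioo r b) :=
        integrableOn_mul_iff_of_continuousOn (g := fun y => (y - r) ^ (-p / 2)) isCompact_Icc
          measurableSet_Ioo Ioo_subset_Icc_self hφ hφ₀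
    _ ↔ -1 < -p / 2 := integrableOn_Ioo_sub_rpow_iff hrb
    _ ↔ p < 2 := by constructor <;> intro <;> linarith

/-- The radial second derivative `‖x‖ / √(‖x‖² - r²)` of the model potential is in
`Lᵖ` of the annulus `{r < ‖x‖ < 2r}` for every `1 ≤ p < 2`, but not in `L²`. -/
theorem stmt2 (r : ℝ) (hr : 0 < r) :
    (∀ p : ℝ, 1 ≤ p → p < 2 →
      IntegrableOn
        (fun x : EuclideanSpace ℝ (Fin 2) =>
          (‖x‖ / Real.sqrt (‖x‖ ^ 2 - r ^ 2)) ^ p)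
        {x : EuclideanSpace ℝ (Fin 2) | r < ‖x‖ ∧ ‖x‖ < 2 * r} volume) ∧
    ¬ IntegrableOn
        (fun x : EuclideanSpace ℝ (Fin 2) =>
          (‖x‖ / Real.sqrt (‖x‖ ^ 2 - r ^ 2)) ^ (2:ℝ))
        {x : EuclideanSpace ℝ (Fin 2) | r < ‖x‖ ∧ ‖x‖ < 2 * r} volume := by
  have key (p : ℝ) :
      IntegrableOn (fun x : EuclideanSpace ℝ (Fin 2) => (‖x‖ / √(‖x‖ ^ 2 - r ^ 2)) ^ p)
        {x | ‖x‖ ∈ Ioo r (2 * r)} volume ↔ p < 2 := by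
    rw [integrableOn_preimage_norm_iff (f := fun y => (y / √(y ^ 2 - r ^ 2)) ^ p) volume
      measurableSet_Ioo fun y hy => hr.trans hy.1, finrank_euclideanSpace_fin]
    simpa using integrableOn_Ioo_mul_div_sqrt_sq_sub_sq_rpow_iff p hr (by linarith)
  exact ⟨fun p _ hp => (key p).mpr hp, fun h => (lt_irrefl 2) ((key 2).mp h)⟩
end

section
/- There is no C² convex function w on the unit ball B₁ ⊂ ℝ² satisfying det D²w ≥ 1 pointwise on B₁ ∩ {x₂ > 0} such that the restriction of w to the segment B₁ ∩ {x₂ = 0} is affine. -/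
/-- The second-order partial derivative `∂²w/∂xᵢ∂xⱼ` within a set `s`. -/
noncomputable def hessEntryWithin (w : EuclideanSpace ℝ (Fin 2) → ℝ)
    (s : Set (EuclideanSpace ℝ (Fin 2))) (x : EuclideanSpace ℝ (Fin 2)) (i j : Fin 2) : ℝ :=
  iteratedFDerivWithin ℝ 2 w s x ![EuclideanSpace.single i 1, EuclideanSpace.single j 1]

/-- The determinant of the Hessian of `w` within a set `s`. -/
noncomputable def detHessWithin (w : EuclideanSpace ℝ (Fin 2) → ℝ)
    (s : Set (EuclideanSpace ℝ (Fin 2))) (x : EuclideanSpace ℝ (Fin 2)) : ℝ :=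
  hessEntryWithin w s x 0 0 * hessEntryWithin w s x 1 1 -
    hessEntryWithin w s x 0 1 * hessEntryWithin w s x 1 0

/-! For a `C²` function the determinant of the Hessian is continuous, so `det D²w ≥ 1` on the
upper half of the ball persists at the origin. But `w` is affine along the segment, so
`∂₁₁w(0) = 0` and, by symmetry of the Hessian, `det D²w(0) = -(∂₁₂w(0))² ≤ 0`. -/

open Filter Topology

theorem fderiv_apply_eq_of_eventually_eq_affine {𝕜 E F : Type*} [NontriviallyNormedField 𝕜]
    [NormedAddCommGroup E] [NormedSpace 𝕜 E] [NormedAddCommGroup F] [NormedSpace 𝕜 F]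
    {f : E → F} {x v : E} {c : F} (hf : DifferentiableAt 𝕜 f x)
    (h : ∀ᶠ t in 𝓝 (0 : 𝕜), f (x + t • v) = f x + t • c) : fderiv 𝕜 f x v = c := by
  have hline : HasDerivAt (fun t : 𝕜 => f (x + t • v)) (fderiv 𝕜 f x v) 0 := by
    have hl : HasDerivAt (fun t : 𝕜 => x + t • v) v 0 := by
      simpa using ((hasDerivAt_id (0 : 𝕜)).smul_const v).const_add x
    exact hf.hasFDerivAt.comp_hasDerivAt_of_eq 0 hl (by simp)
  have haff : HasDerivAt (fun t : 𝕜 => f x + t • c) c 0 := by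
    simpa using ((hasDerivAt_id (0 : 𝕜)).smul_const c).const_add (f x)
  exact hline.unique (haff.congr_of_eventuallyEq h)

theorem mem_closure_inter_setOf_pos {ι : Type*} [Fintype ι] [DecidableEq ι]
    {s : Set (EuclideanSpace ℝ ι)} (hs : IsOpen s) {x : EuclideanSpace ℝ ι} (hx : x ∈ s)
    {i : ι} (hxi : 0 ≤ x i) : x ∈ closure (s ∩ {y | 0 < y i}) := by
  have hlim : Tendsto (fun t : ℝ => x + t • EuclideanSpace.single i 1) (𝓝[>] 0) (𝓝 x) := by
    have : Continuous (fun t : ℝ => x + t • EuclideanSpace.single i (1 : ℝ)) := by fun_prop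
    simpa using (this.tendsto 0).mono_left nhdsWithin_le_nhds
  refine mem_closure_of_tendsto hlim ?_
  filter_upwards [hlim (hs.mem_nhds hx), self_mem_nhdsWithin] with t hts (ht : 0 < t)
  exact ⟨hts, by simpa using add_pos_of_nonneg_of_pos hxi ht⟩

section Hessian

variable {w : EuclideanSpace ℝ (Fin 2) → ℝ} {s : Set (EuclideanSpace ℝ (Fin 2))}
  {x : EuclideanSpace ℝ (Fin 2)}

theorem ContDiffOn.continuousOn_hessEntryWithin (hw : ContDiffOn ℝ 2 w s)
    (hs : UniqueDiffOn ℝ s) (i j : Fin 2) :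
    ContinuousOn (fun x => hessEntryWithin w s x i j) s :=
  (ContinuousMultilinearMap.apply ℝ (fun _ : Fin 2 => EuclideanSpace ℝ (Fin 2)) ℝ
    ![EuclideanSpace.single i 1, EuclideanSpace.single j 1]).continuous.comp_continuousOn
    (hw.continuousOn_iteratedFDerivWithin le_rfl hs)

theorem ContDiffOn.continuousOn_detHessWithin (hw : ContDiffOn ℝ 2 w s)
    (hs : UniqueDiffOn ℝ s) : ContinuousOn (detHessWithin w s) s := by
  have h := hw.continuousOn_hessEntryWithin hs
  exact ((h 0 0).mul (h 1 1)).sub ((h 0 1).mul (h 1 0))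

theorem hessEntryWithin_eq_fderiv (hs : IsOpen s) (hx : x ∈ s) (i j : Fin 2) :
    hessEntryWithin w s x i j =
      fderiv ℝ (fderiv ℝ w) x (EuclideanSpace.single i 1) (EuclideanSpace.single j 1) := by
  rw [hessEntryWithin, iteratedFDerivWithin_of_isOpen 2 hs hx, iteratedFDeriv_two_apply]
  simp

theorem hessEntryWithin_comm (hs : IsOpen s) (hx : x ∈ s) (hw : ContDiffAt ℝ 2 w x)
    (i j : Fin 2) : hessEntryWithin w s x i j = hessEntryWithin w s x j i := by
  simp only [hessEntryWithin_eq_fderiv hs hx]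
  exact hw.isSymmSndFDerivAt (by simp [minSmoothness_of_isRCLikeNormedField]) _ _

theorem detHessWithin_nonpos_of_hessEntryWithin_zero_zero (hs : IsOpen s) (hx : x ∈ s)
    (hw : ContDiffAt ℝ 2 w x) (h00 : hessEntryWithin w s x 0 0 = 0) :
    detHessWithin w s x ≤ 0 := by
  rw [detHessWithin, h00, hessEntryWithin_comm hs hx hw 1 0, zero_mul, zero_sub, neg_nonpos]
  exact mul_self_nonneg _

theorem hessEntryWithin_zero_zero_eq_zero_of_affine (hs : IsOpen s) (hw : ContDiffOn ℝ 2 w s)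
    {a b : ℝ} (haff : ∀ y ∈ s, y 1 = 0 → w y = a * y 0 + b) (hx : x ∈ s) (hx1 : x 1 = 0) :
    hessEntryWithin w s x 0 0 = 0 := by
  set e := EuclideanSpace.single (0 : Fin 2) (1 : ℝ)
  have hline : ∀ y ∈ s, y 1 = 0 → ∀ᶠ t in 𝓝 (0 : ℝ), y + t • e ∈ s ∧ (y + t • e) 1 = 0 := by
    intro y hy hy1
    have : Continuous (fun t : ℝ => y + t • e) := by fun_prop
    filter_upwards [this.continuousAt.preimage_mem_nhds (by simpa using hs.mem_nhds hy)]
      with t ht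
    exact ⟨ht, by simp [e, hy1]⟩
  have hslope : ∀ y ∈ s, y 1 = 0 → fderiv ℝ w y e = a := by
    intro y hy hy1
    refine fderiv_apply_eq_of_eventually_eq_affine
      ((hw.contDiffAt (hs.mem_nhds hy)).differentiableAt (by norm_num)) ?_
    filter_upwards [hline y hy hy1] with t ⟨hts, ht1⟩
    rw [haff _ hts ht1, haff y hy hy1]
    simp only [e, PiLp.add_apply, PiLp.smul_apply, PiLp.single_eq_same, smul_eq_mul, mul_one]
    ring
  have hw' : DifferentiableAt ℝ (fderiv ℝ w) x :=
    ((hw.contDiffAt (hs.mem_nhds hx)).fderiv_right (m := 1) (by norm_num)).differentiableAt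
      (by norm_num)
  have h := fderiv_apply_eq_of_eventually_eq_affine (f := fun y => fderiv ℝ w y e) (v := e) (c := 0)
    (hw'.clm_apply (differentiableAt_const _)) (by
      filter_upwards [hline x hx hx1] with t ⟨hts, ht1⟩
      simp [hslope _ hts ht1, hslope x hx hx1])
  rw [hessEntryWithin_eq_fderiv hs hx, ← h, fderiv_clm_apply hw' (differentiableAt_const _)]
  simp [e]

end Hessian

/-- Lemma 6.1: there is no `C²` convex function `w` on the unit ball `B₁ ⊂ ℝ²` with
`det D²w ≥ 1` on `B₁ ∩ {x₂ > 0}` whose restriction to `B₁ ∩ {x₂ = 0}` is affine. -/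
theorem stmt4 :
    ¬ ∃ w : EuclideanSpace ℝ (Fin 2) → ℝ,
      ContDiffOn ℝ 2 w (Metric.ball 0 1) ∧
      ConvexOn ℝ (Metric.ball 0 1) w ∧
      (∀ x ∈ Metric.ball (0 : EuclideanSpace ℝ (Fin 2)) 1, 0 < x 1 →
        1 ≤ detHessWithin w (Metric.ball 0 1) x) ∧
      (∃ a b : ℝ, ∀ x ∈ Metric.ball (0 : EuclideanSpace ℝ (Fin 2)) 1, x 1 = 0 →
        w x = a * x 0 + b) := by
  rintro ⟨w, hw, -, hdet, a, b, haff⟩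
  have hB : IsOpen (Metric.ball (0 : EuclideanSpace ℝ (Fin 2)) 1) := Metric.isOpen_ball
  have h0 : (0 : EuclideanSpace ℝ (Fin 2)) ∈ Metric.ball 0 1 := Metric.mem_ball_self one_pos
  have hge : 1 ≤ detHessWithin w (Metric.ball 0 1) 0 :=
    ContinuousWithinAt.closure_le (mem_closure_inter_setOf_pos hB h0 le_rfl)
      continuousWithinAt_const
      (((hw.continuousOn_detHessWithin hB.uniqueDiffOn) 0 h0).mono Set.inter_subset_left)
      fun x hx => hdet x hx.1 hx.2
  have hle : detHessWithin w (Metric.ball 0 1) 0 ≤ 0 :=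
    detHessWithin_nonpos_of_hessEntryWithin_zero_zero hB h0 (hw.contDiffAt (hB.mem_nhds h0))
      (hessEntryWithin_zero_zero_eq_zero_of_affine hB hw haff h0 (by simp))
  linarith
end

section
/- Let w be a C² convex function on B₁ ⊂ ℝ² with w ≥ 0, w(x₁, 0) = 0 for all |x₁| < 1, and suppose det D²w ≥ 1 on B₁ ∩ {x₂ > 0}. If additionally w(0, t) = o(t) as t → 0⁺, then a contradiction follows; more precisely, for every k > 0 there exists h > 0 with [-1/2,1/2] × [0, 2kh] ⊂ {w < h}, and for k ≥ 9 the comparison principle applied with Q = 8h x₁² + 2k⁻²h⁻¹(x₂ - kh)² on this rectangle yields Q > w ≥ 0 there, contradicting Q(0, kh) = 0. -/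
open Filter Metric Set Topology

theorem IsLocalMax.secondDeriv_nonpos {g φ : ℝ → ℝ} {a c : ℝ} (hmax : IsLocalMax g a)
    (hg : ∀ᶠ t in 𝓝 a, HasDerivAt g (φ t) t) (hφ : HasDerivAt φ c a) : c ≤ 0 := by
  -- If `c > 0`, the second-derivative test makes `a` a local minimum as well, so `g` is
  -- locally constant and `c = 0`.
  by_contra! hc
  have hdg : deriv g =ᶠ[𝓝 a] φ := hg.mono fun t ht => ht.deriv
  have hmin : IsLocalMin g a := by
    refine isLocalMin_of_deriv_deriv_pos ?_ ?_ hg.self_of_nhds.continuousAt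
    · rwa [hdg.deriv_eq, hφ.deriv]
    · rw [hdg.eq_of_nhds]
      exact hmax.hasDerivAt_eq_zero hg.self_of_nhds
  have hconst : g =ᶠ[𝓝 a] fun _ => g a :=
    (hmin.and hmax).mono fun t ht => le_antisymm ht.2 ht.1
  have : deriv (deriv g) a = 0 := by
    rw [hconst.deriv.deriv_eq]
    simp
  rw [hdg.deriv_eq, hφ.deriv] at this
  exact hc.ne' this

theorem ConvexOn.secondDeriv_nonneg {g φ : ℝ → ℝ} {s : Set ℝ} {a c : ℝ} (hconv : ConvexOn ℝ s g)
    (hs : s ∈ 𝓝 a) (hg : ∀ t ∈ s, HasDerivAt g (φ t) t) (hφ : HasDerivAt φ c a) : 0 ≤ c := by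
  have hmono : MonotoneOn φ s := fun x hx y hy hxy => by
    rw [← (hg x hx).deriv, ← (hg y hy).deriv]
    exact hconv.monotoneOn_deriv (fun t ht => (hg t ht).differentiableAt) hx hy hxy
  refine hφ.hasDerivWithinAt.nonneg_of_monotoneOn ?_ hmono
  rw [accPt_principal_iff_nhdsWithin, sdiff_eq, nhdsWithin_inter_of_mem
    (mem_nhdsWithin_of_mem_nhds hs)]
  infer_instance

section LineRestriction

variable {E F : Type*} [NormedAddCommGroup E] [NormedSpace ℝ E] [NormedAddCommGroup F]
  [NormedSpace ℝ F]

theorem hasDerivAt_comp_add_smul {f : E → F} {x v : E} {t : ℝ}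
    (hf : DifferentiableAt ℝ f (x + t • v)) :
    HasDerivAt (fun s : ℝ => f (x + s • v)) (fderiv ℝ f (x + t • v) v) t := by
  refine hf.hasFDerivAt.comp_hasDerivAt t ?_
  simpa using ((hasDerivAt_id t).smul_const v).const_add x

theorem hasDerivAt_fderiv_comp_add_smul {f : E → F} {x v : E}
    (hf : DifferentiableAt ℝ (fderiv ℝ f) x) :
    HasDerivAt (fun s : ℝ => fderiv ℝ f (x + s • v) v) (fderiv ℝ (fderiv ℝ f) x v v) 0 := by
  have hline := hasDerivAt_comp_add_smul (f := fderiv ℝ f) (t := 0) (v := v)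
    (by rwa [zero_smul, add_zero])
  rw [zero_smul, add_zero] at hline
  convert hline.clm_apply (hasDerivAt_const (0 : ℝ) v) using 1
  simp only [map_zero, add_zero]

theorem tendsto_add_smul (x v : E) : Tendsto (fun t : ℝ => x + t • v) (𝓝 0) (𝓝 x) :=
  (by fun_prop : Continuous fun t : ℝ => x + t • v).tendsto' 0 x (by simp)

theorem IsLocalMax.comp_add_smul {f : E → ℝ} {x : E} (hf : IsLocalMax f x) (v : E) :
    IsLocalMax (fun t : ℝ => f (x + t • v)) 0 :=
  IsMaxFilter.comp_tendsto (g := fun t : ℝ => x + t • v) (b := 0)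
    (by rw [zero_smul, add_zero]; exact hf) (tendsto_add_smul x v)

theorem ConvexOn.fderiv_fderiv_apply_self_nonneg {f : E → ℝ} {U : Set E} {x : E}
    (hconv : ConvexOn ℝ U f) (hU : IsOpen U) (hx : x ∈ U) (hfd : DifferentiableOn ℝ f U)
    (hf' : DifferentiableAt ℝ (fderiv ℝ f) x) (v : E) :
    0 ≤ fderiv ℝ (fderiv ℝ f) x v v := by
  have hline : ⇑(AffineMap.lineMap x (x + v) : ℝ →ᵃ[ℝ] E) = fun t => x + t • v := by
    ext t
    simp [AffineMap.lineMap_apply, add_comm]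
  have hconv' := hconv.comp_affineMap (AffineMap.lineMap x (x + v))
  rw [hline] at hconv'
  refine hconv'.secondDeriv_nonneg (tendsto_add_smul x v (hU.mem_nhds hx)) (fun t ht => ?_)
    (hasDerivAt_fderiv_comp_add_smul hf')
  exact hasDerivAt_comp_add_smul (hfd.differentiableAt (hU.mem_nhds ht))

theorem IsLocalMax.fderiv_fderiv_apply_self_le {f : E → ℝ} {x v : E} {α β γ : ℝ}
    (hmax : IsLocalMax (fun t : ℝ => f (x + t • v) - (α + β * t + γ * t ^ 2)) 0)
    (hfd : ∀ᶠ y in 𝓝 x, DifferentiableAt ℝ f y) (hf' : DifferentiableAt ℝ (fderiv ℝ f) x) :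
    fderiv ℝ (fderiv ℝ f) x v v ≤ 2 * γ := by
  have hquad (t : ℝ) : HasDerivAt (fun t => α + β * t + γ * t ^ 2) (β + 2 * γ * t) t := by
    refine ((((hasDerivAt_id' t).const_mul β).const_add α).add
      ((hasDerivAt_pow 2 t).const_mul γ)).congr_deriv ?_
    simp only [Nat.cast_ofNat, Nat.add_one_sub_one, pow_one]
    ring
  have hlin : HasDerivAt (fun t => β + 2 * γ * t) (2 * γ) 0 := by
    simpa using ((hasDerivAt_id (0 : ℝ)).const_mul (2 * γ)).const_add β
  have hdiff : ∀ᶠ t in 𝓝 (0 : ℝ), DifferentiableAt ℝ f (x + t • v) := tendsto_add_smul x v hfd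
  have := hmax.secondDeriv_nonpos
    (hdiff.mono fun t ht => (hasDerivAt_comp_add_smul ht).sub (hquad t))
    ((hasDerivAt_fderiv_comp_add_smul hf').sub hlin)
  linarith

end LineRestriction

local notation "ℝ²" => EuclideanSpace ℝ (Fin 2)

theorem hessEntryWithin_eq_fderiv_fderiv {w : ℝ² → ℝ} {U : Set ℝ²} {z : ℝ²} (hU : IsOpen U)
    (hz : z ∈ U) (i j : Fin 2) :
    hessEntryWithin w U z i j =
      fderiv ℝ (fderiv ℝ w) z (EuclideanSpace.single i 1) (EuclideanSpace.single j 1) := by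
  rw [hessEntryWithin, iteratedFDerivWithin_of_isOpen 2 hU hz, iteratedFDeriv_two_apply]
  simp

theorem detHessWithin_le_of_isLocalMax_sub_quadratic {w : ℝ² → ℝ} {U : Set ℝ²} {z : ℝ²}
    (hU : IsOpen U) (hz : z ∈ U) (hreg : ContDiffOn ℝ 2 w U) (hconv : ConvexOn ℝ U w)
    {a b c₀ c₁ : ℝ}
    (hmax : IsLocalMax (fun x : ℝ² => w x - (a * (x 0 - c₀) ^ 2 + b * (x 1 - c₁) ^ 2)) z) :
    detHessWithin w U z ≤ 4 * a * b := by
  have hw : ContDiffAt ℝ 2 w z := hreg.contDiffAt (hU.mem_nhds hz)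
  have hfd : ∀ᶠ y in 𝓝 z, DifferentiableAt ℝ w y :=
    (hU.eventually_mem hz).mono fun y hy =>
      (hreg.contDiffAt (hU.mem_nhds hy)).differentiableAt two_ne_zero
  have hf' : DifferentiableAt ℝ (fderiv ℝ w) z :=
    (hw.fderiv_right (m := 1) (by norm_num)).differentiableAt one_ne_zero
  set D := fderiv ℝ (fderiv ℝ w) z
  set e₀ : ℝ² := EuclideanSpace.single 0 1
  set e₁ : ℝ² := EuclideanSpace.single 1 1
  have h₀₀ : D e₀ e₀ ≤ 2 * a := by
    refine IsLocalMax.fderiv_fderiv_apply_self_le (α := a * (z 0 - c₀) ^ 2 + b * (z 1 - c₁) ^ 2)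
      (β := 2 * a * (z 0 - c₀)) ?_ hfd hf'
    convert hmax.comp_add_smul e₀ using 3 with t
    simp only [e₀, PiLp.add_apply, PiLp.smul_apply, PiLp.single_eq_same,
      PiLp.single_eq_of_ne, ne_eq, one_ne_zero, not_false_eq_true, smul_eq_mul]
    ring
  have h₁₁ : D e₁ e₁ ≤ 2 * b := by
    refine IsLocalMax.fderiv_fderiv_apply_self_le (α := a * (z 0 - c₀) ^ 2 + b * (z 1 - c₁) ^ 2)
      (β := 2 * b * (z 1 - c₁)) ?_ hfd hf'
    convert hmax.comp_add_smul e₁ using 3 with t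
    simp only [e₁, PiLp.add_apply, PiLp.smul_apply, PiLp.single_eq_same,
      PiLp.single_eq_of_ne, ne_eq, zero_ne_one, not_false_eq_true, smul_eq_mul]
    ring
  have hsymm : D e₀ e₁ = D e₁ e₀ := hw.isSymmSndFDerivAt (by simp) e₀ e₁
  have hpos (v : ℝ²) : 0 ≤ D v v :=
    hconv.fderiv_fderiv_apply_self_nonneg hU hz (hreg.differentiableOn two_ne_zero) hf' v
  simp only [detHessWithin, hessEntryWithin_eq_fderiv_fderiv hU hz]
  change D e₀ e₀ * D e₁ e₁ - D e₀ e₁ * D e₁ e₀ ≤ 4 * a * b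
  rw [hsymm]
  nlinarith [mul_le_mul h₀₀ h₁₁ (hpos e₁) ((hpos e₀).trans h₀₀), mul_self_nonneg (D e₁ e₀)]

theorem mem_ball_zero_one_of_abs_le_half {x : ℝ²} (h₀ : |x 0| ≤ 1 / 2) (h₁ : |x 1| ≤ 1 / 2) :
    x ∈ ball (0 : ℝ²) 1 := by
  rw [mem_ball_zero_iff, EuclideanSpace.norm_eq, Real.sqrt_lt' one_pos, Fin.sum_univ_two,
    Real.norm_eq_abs, Real.norm_eq_abs]
  nlinarith [abs_nonneg (x 0), abs_nonneg (x 1)]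

theorem ConvexOn.apply_le_div_mul_apply_single {w : ℝ² → ℝ} (hconv : ConvexOn ℝ (ball 0 1) w)
    (hzero : ∀ x ∈ ball (0 : ℝ²) 1, x 1 = 0 → w x = 0) {t : ℝ} (ht : 0 < t) (ht₁ : t < 1)
    {x : ℝ²} (hx₀ : |x 0| ≤ 1 / 2) (hx₁ : x 1 ∈ Icc 0 (t / 3)) :
    w x ≤ x 1 / t * w (EuclideanSpace.single 1 t) := by
  set l := x 1 / t
  have hl₀ : 0 ≤ l := div_nonneg hx₁.1 ht.le
  have hl₁ : l ≤ 1 / 3 := by rw [div_le_iff₀ ht]; linarith [hx₁.2]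
  set p : ℝ² := EuclideanSpace.single 1 t
  set q : ℝ² := EuclideanSpace.single 0 (x 0 / (1 - l))
  have hp : p ∈ ball (0 : ℝ²) 1 := by
    simpa [p, abs_of_pos ht] using ht₁
  have hl : 0 < 1 - l := by linarith
  have hq : q ∈ ball (0 : ℝ²) 1 := by
    simpa [q, abs_div, abs_of_pos hl, div_lt_one hl] using (by linarith : |x 0| < 1 - l)
  have hx : (1 - l) • q + l • p = x := by
    ext i
    fin_cases i
    · simp [p, q, mul_div_cancel₀ _ hl.ne']
    · simp [p, q, l, div_mul_cancel₀ _ ht.ne']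
  have hwq : w q = 0 := hzero q hq (by simp [q])
  calc w x = w ((1 - l) • q + l • p) := by rw [hx]
    _ ≤ (1 - l) • w q + l • w p := hconv.2 hq hp (by linarith) hl₀ (by ring)
    _ = l * w p := by simp [hwq]

theorem exists_rectangle_subset_sublevel {w : ℝ² → ℝ} (hconv : ConvexOn ℝ (ball 0 1) w)
    (hnonneg : ∀ x ∈ ball (0 : ℝ²) 1, 0 ≤ w x)
    (hzero : ∀ x ∈ ball (0 : ℝ²) 1, x 1 = 0 → w x = 0)
    (hlittleo : Tendsto (fun t : ℝ => w (EuclideanSpace.single 1 t) / t) (𝓝[>] 0) (𝓝 0))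
    {k : ℝ} (hk : 0 < k) :
    ∃ h : ℝ, 0 < h ∧ ∀ x : ℝ², |x 0| ≤ 1 / 2 → x 1 ∈ Icc 0 (2 * k * h) →
      x ∈ ball (0 : ℝ²) 1 ∧ w x < h := by
  obtain ⟨t, hwt, ht, ht₁⟩ := ((hlittleo.eventually (eventually_lt_nhds (by positivity :
    (0 : ℝ) < 1 / (2 * k)))).and (Ioo_mem_nhdsGT (by norm_num : (0 : ℝ) < 1 / 2))).exists
  refine ⟨t / (6 * k), by positivity, fun x hx₀ hx₁ => ?_⟩
  rw [show 2 * k * (t / (6 * k)) = t / 3 by field_simp; ring] at hx₁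
  have hx : x ∈ ball (0 : ℝ²) 1 :=
    mem_ball_zero_one_of_abs_le_half hx₀ (by rw [abs_of_nonneg hx₁.1]; linarith [hx₁.2])
  refine ⟨hx, ?_⟩
  have hp := hnonneg (EuclideanSpace.single 1 t)
    (mem_ball_zero_one_of_abs_le_half (by simp) (by simpa [abs_of_pos ht] using ht₁.le))
  have hl : x 1 / t ≤ 1 / 3 := by rw [div_le_iff₀ ht]; linarith [hx₁.2]
  rw [div_lt_iff₀ ht] at hwt
  calc w x ≤ x 1 / t * w (EuclideanSpace.single 1 t) :=
        ConvexOn.apply_le_div_mul_apply_single hconv hzero ht (by linarith) hx₀ hx₁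
    _ ≤ 1 / 3 * w (EuclideanSpace.single 1 t) := mul_le_mul_of_nonneg_right hl hp
    _ < t / (6 * k) := by field_simp at hwt ⊢; linarith

/-- The paper's `Q = 8h x₁² + 2k⁻²h⁻¹(x₂ - kh)²`, with `x 0`, `x 1` in the roles of `x₁`, `x₂`. -/
noncomputable def comparisonQuadratic (k h : ℝ) (x : ℝ²) : ℝ :=
  8 * h * x 0 ^ 2 + 2 / (k ^ 2 * h) * (x 1 - k * h) ^ 2

theorem mem_rectangle_of_comparisonQuadratic_lt {k h : ℝ} (hk : 0 < k) (hh : 0 < h) {x : ℝ²}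
    (hQ : comparisonQuadratic k h x < h) : |x 0| < 1 / 2 ∧ x 1 ∈ Ioo 0 (2 * k * h) := by
  have hQ₀ : 0 ≤ 8 * h * x 0 ^ 2 := by positivity
  have hQ₁ : 0 ≤ 2 / (k ^ 2 * h) * (x 1 - k * h) ^ 2 := by positivity
  unfold comparisonQuadratic at hQ
  have h₀ : x 0 ^ 2 < (1 / 2) ^ 2 := by nlinarith
  have h₁ : (x 1 - k * h) ^ 2 < (k * h) ^ 2 := by
    have : 2 / (k ^ 2 * h) * (x 1 - k * h) ^ 2 < h := by linarith
    rw [div_mul_eq_mul_div, div_lt_iff₀ (by positivity)] at this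
    nlinarith [sq_nonneg (x 1 - k * h)]
  have h₁' := abs_lt.1 (abs_lt_of_sq_lt_sq h₁ (by positivity))
  exact ⟨abs_lt_of_sq_lt_sq h₀ (by norm_num), by linarith, by linarith⟩

theorem false_of_rectangle_subset_sublevel {w : ℝ² → ℝ} (hreg : ContDiffOn ℝ 2 w (ball 0 1))
    (hconv : ConvexOn ℝ (ball 0 1) w) (hnonneg : ∀ x ∈ ball (0 : ℝ²) 1, 0 ≤ w x)
    (hdet : ∀ x ∈ ball (0 : ℝ²) 1, 0 < x 1 → 1 ≤ detHessWithin w (ball 0 1) x)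
    {k h : ℝ} (hk : 8 < k) (hh : 0 < h)
    (hrect : ∀ x : ℝ², |x 0| ≤ 1 / 2 → x 1 ∈ Icc 0 (2 * k * h) →
      x ∈ ball (0 : ℝ²) 1 ∧ w x < h) :
    False := by
  set R : Set ℝ² := {x | |x 0| ≤ 1 / 2} ∩ (fun x => x 1) ⁻¹' Icc 0 (2 * k * h)
  have hRball : R ⊆ ball 0 1 := fun x hx => (hrect x hx.1 hx.2).1
  have hR : IsCompact R := isCompact_of_isClosed_isBounded
    ((isClosed_le (by fun_prop) continuous_const).inter (isClosed_Icc.preimage (by fun_prop)))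
    (isBounded_ball.subset hRball)
  have hkh : 0 < k * h := mul_pos (by linarith) hh
  set c : ℝ² := EuclideanSpace.single 1 (k * h)
  have hc : c ∈ R := ⟨by simp [c], by simpa [c] using ⟨hkh.le, (by linarith : k * h ≤ 2 * k * h)⟩⟩
  obtain ⟨z, hzR, hzmax⟩ := hR.exists_isMaxOn ⟨c, hc⟩ ((hreg.continuousOn.mono hRball).sub
    (by unfold comparisonQuadratic; fun_prop : Continuous (comparisonQuadratic k h)).continuousOn)
  have hQz : comparisonQuadratic k h z < h := by
    have hQc : comparisonQuadratic k h c = 0 := by simp [comparisonQuadratic, c]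
    have : (w - comparisonQuadratic k h) c ≤ (w - comparisonQuadratic k h) z := hzmax hc
    rw [Pi.sub_apply, Pi.sub_apply, hQc] at this
    linarith [hnonneg c (hRball hc), (hrect z hzR.1 hzR.2).2]
  obtain ⟨hz₀, hz₁⟩ := mem_rectangle_of_comparisonQuadratic_lt (by linarith) hh hQz
  have hRz : R ∈ 𝓝 z := by
    have hV : IsOpen ({x : ℝ² | |x 0| < 1 / 2} ∩ (fun x => x 1) ⁻¹' Ioo 0 (2 * k * h)) :=
      (isOpen_lt (by fun_prop) continuous_const).inter (isOpen_Ioo.preimage (by fun_prop))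
    exact mem_of_superset (hV.mem_nhds ⟨hz₀, hz₁⟩)
      fun x hx => ⟨show |x 0| ≤ 1 / 2 from hx.1.le, Ioo_subset_Icc_self hx.2⟩
  have hmax : IsLocalMax (fun x => w x - comparisonQuadratic k h x) z := hzmax.isLocalMax hRz
  unfold comparisonQuadratic at hmax
  have hdetz := detHessWithin_le_of_isLocalMax_sub_quadratic isOpen_ball (hRball hzR) hreg hconv
    (c₀ := 0) (by simpa only [sub_zero] using hmax)
  have : 4 * (8 * h) * (2 / (k ^ 2 * h)) < 1 := by
    rw [show 4 * (8 * h) * (2 / (k ^ 2 * h)) = 64 / k ^ 2 by field_simp; ring,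
      div_lt_one (by positivity)]
    nlinarith
  linarith [hdet z (hRball hzR) hz₁.1]

/-- The full argument of Lemma 6.1: if `w` is `C²` convex on `B₁ ⊂ ℝ²`, nonnegative,
vanishing on `{x₂ = 0}`, with `det D²w ≥ 1` on `B₁ ∩ {x₂ > 0}` and `w(0, t) = o(t)`
as `t → 0⁺`, then for every `k > 0` there is `h > 0` with
`[-1/2, 1/2] × [0, 2kh] ⊂ {w < h}`, and a contradiction follows. -/
theorem stmt6 (w : EuclideanSpace ℝ (Fin 2) → ℝ)
    (hreg : ContDiffOn ℝ 2 w (Metric.ball 0 1))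
    (hconv : ConvexOn ℝ (Metric.ball 0 1) w)
    (hnonneg : ∀ x ∈ Metric.ball (0 : EuclideanSpace ℝ (Fin 2)) 1, 0 ≤ w x)
    (hzero : ∀ x ∈ Metric.ball (0 : EuclideanSpace ℝ (Fin 2)) 1, x 1 = 0 → w x = 0)
    (hdet : ∀ x ∈ Metric.ball (0 : EuclideanSpace ℝ (Fin 2)) 1, 0 < x 1 →
      1 ≤ detHessWithin w (Metric.ball 0 1) x)
    (hlittleo : Filter.Tendsto
      (fun t : ℝ => w (EuclideanSpace.single 1 t) / t)
      (nhdsWithin 0 (Set.Ioi 0)) (nhds 0)) :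
    (∀ k : ℝ, 0 < k → ∃ h : ℝ, 0 < h ∧
      ∀ x : EuclideanSpace ℝ (Fin 2), |x 0| ≤ 1 / 2 → x 1 ∈ Set.Icc 0 (2 * k * h) →
        x ∈ Metric.ball (0 : EuclideanSpace ℝ (Fin 2)) 1 ∧ w x < h) ∧
    False := by
  have hrect (k : ℝ) (hk : 0 < k) :=
    exists_rectangle_subset_sublevel hconv hnonneg hzero hlittleo hk
  obtain ⟨h, hh, hsub⟩ := hrect 9 (by norm_num)
  exact ⟨hrect, false_of_rectangle_subset_sublevel hreg hconv hnonneg hdet (by norm_num) hh hsub⟩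
end
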